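/- Let n ≥ 1 and let τ and σ be permutations of ℤ/nℤ such that P_τᵀ · F_n · P_σ = F_n. Then there exist p, r ∈ ℤ/nℤ such that τ(j) = p·j for all j ∈ ℤ/nℤ, σ(k) = r·k for all k ∈ ℤ/nℤ, and p·r = 1 in ℤ/nℤ. -/

import Mathlib

/-!
Conjugating by permutation matrices permutes entries: the hypothesis says `F[τ j, σ k] = F[j, k]`.
Since `F[j, k]` is `ZMod.stdAddChar (j * k) / √n` and that character is injective, this gives
`τ j * σ k = j * k` for all `j, k`; evaluating at the preimages of `1` under `τ` and `σ` then
exhibits both permutations as multiplications by mutually inverse units.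
-/

open Matrix Complex

/-- The `n × n` Fourier matrix, with entries `F[j,k] = exp(2πi·jk/n)/√n`. -/
noncomputable def Fourier (n : ℕ) : Matrix (ZMod n) (ZMod n) ℂ :=
  Matrix.of fun j k =>
    ((1 / Real.sqrt n : ℝ) : ℂ) *
      Complex.exp (2 * Real.pi * Complex.I * ((j.val : ℂ) * (k.val : ℂ)) / (n : ℂ))

/-- The permutation matrix of a map `σ`: `P[j,k] = 1` if `j = σ k`, else `0`. -/
def permMat {n : ℕ} (σ : ZMod n → ZMod n) : Matrix (ZMod n) (ZMod n) ℂ :=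
  Matrix.of fun j k => if j = σ k then 1 else 0

lemma permMat_transpose_mul_mul_permMat_apply {n : ℕ} [NeZero n] (τ σ : ZMod n → ZMod n)
    (A : Matrix (ZMod n) (ZMod n) ℂ) (j k : ZMod n) :
    ((permMat τ)ᵀ * A * permMat σ) j k = A (τ j) (σ k) := by
  simp [Matrix.mul_apply, permMat]

lemma Fourier_apply {n : ℕ} [NeZero n] (j k : ZMod n) :
    Fourier n j k = ((Real.sqrt n)⁻¹ : ℂ) * ZMod.stdAddChar (j * k) := by
  have hjk : j * k = ((j.val * k.val : ℕ) : ZMod n) := by simp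
  rw [hjk, ZMod.stdAddChar_apply, ZMod.toCircle_natCast]
  simp [Fourier]

lemma mul_eq_mul_of_Fourier_apply_eq {n : ℕ} [NeZero n] {a b c d : ZMod n}
    (h : Fourier n a b = Fourier n c d) : a * b = c * d := by
  rw [Fourier_apply, Fourier_apply] at h
  have hn : ((Real.sqrt n)⁻¹ : ℂ) ≠ 0 := by simp [NeZero.ne n]
  exact ZMod.injective_stdAddChar (mul_left_cancel₀ hn h)

theorem exists_eq_mul_of_map_mul_map_eq_mul {R : Type*} [CommMonoid R] {f g : R → R}
    (hf : Function.Surjective f) (hg : Function.Surjective g)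
    (h : ∀ j k, f j * g k = j * k) :
    ∃ p r : R, (∀ j, f j = p * j) ∧ (∀ k, g k = r * k) ∧ p * r = 1 := by
  obtain ⟨j₁, hj₁⟩ := hf 1
  obtain ⟨k₁, hk₁⟩ := hg 1
  refine ⟨k₁, j₁, fun j => ?_, fun k => ?_, ?_⟩
  · simpa [hk₁, mul_comm] using h j k₁
  · simpa [hj₁, mul_comm] using h j₁ k
  · simpa [hj₁, hk₁, mul_comm, eq_comm] using h j₁ k₁

theorem fourier_perm_invariance
    (n : ℕ) [NeZero n] (τ σ : Equiv.Perm (ZMod n))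
    (h : (permMat τ)ᵀ * Fourier n * permMat σ = Fourier n) :
    ∃ p r : ZMod n, (∀ j, τ j = p * j) ∧ (∀ k, σ k = r * k) ∧ p * r = 1 := by
  refine exists_eq_mul_of_map_mul_map_eq_mul τ.surjective σ.surjective fun j k => ?_
  apply mul_eq_mul_of_Fourier_apply_eq
  rw [← permMat_transpose_mul_mul_permMat_apply τ σ (Fourier n), h]
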